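/- arXiv:2408.12933 — 5 statements merged into one kernel-verified Lean document; each statement's English description precedes it below -/
import Mathlib

section
/- Suppose m₀ : [0,1] → [0,∞) is nondecreasing with ∫₀¹ m₀(v) dv = 1, that γ_r ≥ γ, x_ε ≥ E(X), G(I_{0 x_ε}) ≤ 0, and that the condition K₀′(0) · ∫_{x_ε}^∞ (1 − F(x)) dx ≤ ∫₀^{x_ε} K₀(F(x)) dx holds, where K₀′(0) denotes the right derivative of K₀ at 0. Then C_VaR(I_{ab}) ≤ γ_r for every truncated stop loss contract I_{ab} with 0 ≤ a ≤ b and VaR(R_{I_{ab}}) > 0. -/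
open MeasureTheory Set Filter

noncomputable section

/-- Truncated stop loss contract `I_{ab}` with cut-off points `a ≤ b`. -/
def Iab (a b x : ℝ) : ℝ := min (max (x - a) 0) (b - a)

/-- Admissible reinsurance function: `0 ≤ I x ≤ x` together with the
incentive compatible (slope) condition. -/
def Admissible (I : ℝ → ℝ) : Prop :=
  (∀ x, 0 ≤ x → 0 ≤ I x ∧ I x ≤ x) ∧
    ∀ x₁ x₂, 0 ≤ x₁ → x₁ ≤ x₂ → 0 ≤ I x₂ - I x₁ ∧ I x₂ - I x₁ ≤ x₂ - x₁

/-- Pricing kernel `K(u) = ∫_u^1 (m v - 1) dv`. -/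
def Ker (m : ℝ → ℝ) (u : ℝ) : ℝ := ∫ v in u..1, (m v - 1)

/-- Insurer's expected profit `G(I) = γ E(X) - ∫_0^∞ K(F x) I'(x) dx`. -/
def Profit (γ EX : ℝ) (K F I : ℝ → ℝ) : ℝ :=
  γ * EX - ∫ x in Ioi (0:ℝ), K (F x) * deriv I x

/-- Value at Risk of the retained risk `R_I(X) = X - I(X)` at level `ε`,
given the `(1-ε)`-quantile `xε`. -/
def VaRRet (I : ℝ → ℝ) (xε : ℝ) : ℝ := xε - I xε

/-- Conditional Value at Risk of the retained risk:
`E(X | X ≥ xε) - I(xε) - (1/ε) ∫_{xε}^∞ (1 - F x) I'(x) dx`, where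
`E(X | X ≥ xε) = xε + (1/ε) ∫_{xε}^∞ (1 - F x) dx`. -/
def CVaRRet (F I : ℝ → ℝ) (ε xε : ℝ) : ℝ :=
  (xε + ε⁻¹ * ∫ x in Ioi xε, (1 - F x)) - I xε
    - ε⁻¹ * ∫ x in Ioi xε, (1 - F x) * deriv I x

/-- Full pricing kernel `K(u) = (1+γr) K₀(u) + γr (1-u)` built from a
normalized kernel `K₀`. -/
def KFull (K₀ : ℝ → ℝ) (γr u : ℝ) : ℝ := (1 + γr) * K₀ u + γr * (1 - u)

end

/-!
Since `I_{ab}'` is the indicator of `(a, b)`, `G(I_{ab}) = γ E(X) - ∫_a^b K(F)`, while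
`VaR(R_{I_{ab}}) = x_ε - (b ∧ x_ε - a ∧ x_ε)`; as `K ≥ 0`, it suffices to treat
`0 ≤ a ≤ b ≤ x_ε`. Monotonicity of `m₀` makes `K₀(u)/u` nonincreasing, so
`0 ≤ K₀(u) ≤ K₀'(0) u`. If `(1 + γ_r) K₀'(0) ≤ γ_r`, then `K(F) ≤ γ_r`, and removing `[a, b]`
from `[0, x_ε]` in `G(I_{0 x_ε}) ≤ 0` gives the bound. Otherwise bound `γ E(X)` by `γ_r E(X)`,
split `E(X) = ∫_0^{x_ε} (1 - F) + ∫_{x_ε}^∞ (1 - F)`, and compare the tail with `∫_a^b K₀(F)`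
through the condition on `K₀'(0)`, using `K₀(F) ≤ K₀'(0) F` off `[a, b]`.
-/

open Topology
open intervalIntegral (integral_add_adjacent_intervals integral_mono_interval integral_mono_on
  integral_of_le integral_same)

lemma Iab_eq_min_sub_min {a b : ℝ} (hab : a ≤ b) (x : ℝ) : Iab a b x = min b x - min a x := by
  simp only [Iab, min_def, max_def]
  split_ifs <;> linarith

section StopLossDerivative

variable {a b x : ℝ}

lemma deriv_Iab_of_lt (hx : x < a) : deriv (Iab a b) x = 0 := by
  have h : Iab a b =ᶠ[𝓝 x] fun _ => min 0 (b - a) := by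
    filter_upwards [Iio_mem_nhds hx] with y hy
    simp [Iab, max_eq_right (by linarith [mem_Iio.mp hy] : y - a ≤ 0)]
  rw [h.deriv_eq, deriv_const]

lemma deriv_Iab_of_mem (hx : x ∈ Ioo a b) : deriv (Iab a b) x = 1 := by
  have h : Iab a b =ᶠ[𝓝 x] fun y => y - a := by
    filter_upwards [Ioo_mem_nhds hx.1 hx.2] with y hy
    simp [Iab, max_eq_left (by linarith [hy.1] : (0:ℝ) ≤ y - a),
      min_eq_left (by linarith [hy.2] : y - a ≤ b - a)]
  rw [h.deriv_eq]
  simp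

lemma deriv_Iab_of_gt (hab : a ≤ b) (hx : b < x) : deriv (Iab a b) x = 0 := by
  have h : Iab a b =ᶠ[𝓝 x] fun _ => b - a := by
    filter_upwards [Ioi_mem_nhds hx] with y hy
    simp [Iab, max_eq_left (by linarith [mem_Ioi.mp hy] : (0:ℝ) ≤ y - a),
      min_eq_right (by linarith [mem_Ioi.mp hy] : b - a ≤ y - a)]
  rw [h.deriv_eq, deriv_const]

lemma deriv_Iab_ae_eq_indicator (hab : a ≤ b) :
    deriv (Iab a b) =ᵐ[volume] (Ioo a b).indicator 1 := by
  have hfin : ({a, b} : Set ℝ)ᶜ ∈ ae volume :=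
    compl_mem_ae_iff.mpr (((finite_singleton b).insert a).measure_zero _)
  filter_upwards [hfin] with x hx
  simp only [mem_compl_iff, mem_insert_iff, mem_singleton_iff, not_or] at hx
  rcases lt_or_gt_of_ne hx.1 with hxa | hax
  · rw [deriv_Iab_of_lt hxa, indicator_of_notMem fun h => (h.1.trans hxa).false]
  rcases lt_or_gt_of_ne hx.2 with hxb | hbx
  · rw [deriv_Iab_of_mem ⟨hax, hxb⟩, indicator_of_mem (show x ∈ Ioo a b from ⟨hax, hxb⟩),
      Pi.one_apply]
  · rw [deriv_Iab_of_gt hab hbx, indicator_of_notMem fun h => (h.2.trans hbx).false]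

lemma setIntegral_Ioi_mul_deriv_Iab (g : ℝ → ℝ) (ha : 0 ≤ a) (hab : a ≤ b) :
    ∫ x in Ioi 0, g x * deriv (Iab a b) x = ∫ x in a..b, g x := by
  have hcongr : (fun x => g x * deriv (Iab a b) x) =ᵐ[volume] (Ioo a b).indicator g := by
    filter_upwards [deriv_Iab_ae_eq_indicator hab] with x hx
    by_cases h : x ∈ Ioo a b <;> simp [hx, h]
  rw [integral_congr_ae (ae_restrict_of_ae hcongr), setIntegral_indicator measurableSet_Ioo,
    inter_eq_right.mpr (show Ioo a b ⊆ Ioi 0 from fun x hx => ha.trans_lt hx.1),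
    integral_of_le hab, integral_Ioc_eq_integral_Ioo]

end StopLossDerivative

lemma Profit_Iab (γ EX : ℝ) (K F : ℝ → ℝ) {a b : ℝ} (ha : 0 ≤ a) (hab : a ≤ b) :
    Profit γ EX K F (Iab a b) = γ * EX - ∫ x in a..b, K (F x) := by
  rw [Profit, setIntegral_Ioi_mul_deriv_Iab _ ha hab]

section Kernel

variable {m : ℝ → ℝ}

lemma mul_integral_le_mul_integral_of_monotoneOn {s t : ℝ} (hm : MonotoneOn m (Icc 0 t))
    (hs : 0 ≤ s) (hst : s ≤ t) : t * ∫ v in 0..s, m v ≤ s * ∫ v in 0..t, m v := by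
  have hint : ∀ p ∈ Icc 0 t, ∀ q ∈ Icc 0 t, IntervalIntegrable m volume p q :=
    fun p hp q hq => (hm.mono (uIcc_subset_Icc hp hq)).intervalIntegrable
  have h0 : (0:ℝ) ∈ Icc 0 t := left_mem_Icc.2 (hs.trans hst)
  have hs' : s ∈ Icc 0 t := ⟨hs, hst⟩
  have ht : t ∈ Icc 0 t := right_mem_Icc.2 (hs.trans hst)
  have hlow : ∫ v in 0..s, m v ≤ s * m s := by
    simpa using integral_mono_on hs (hint 0 h0 s hs') intervalIntegrable_const
      fun v hv => hm ⟨hv.1, hv.2.trans hst⟩ hs' hv.2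
  have hhigh : (t - s) * m s ≤ ∫ v in s..t, m v := by
    simpa using integral_mono_on hst intervalIntegrable_const (hint s hs' t ht)
      fun v hv => hm hs' ⟨hs.trans hv.1, hv.2⟩ hv.1
  rw [← integral_add_adjacent_intervals (hint 0 h0 s hs') (hint s hs' t ht)]
  nlinarith

lemma Ker_eq_sub_integral (hm : IntervalIntegrable m volume 0 1)
    (hnorm : ∫ v in (0:ℝ)..1, m v = 1) {u : ℝ} (hu : u ∈ Icc (0:ℝ) 1) :
    Ker m u = u - ∫ v in 0..u, m v := by
  have hint : ∀ p ∈ Icc (0:ℝ) 1, ∀ q ∈ Icc (0:ℝ) 1, IntervalIntegrable m volume p q :=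
    fun p hp q hq => hm.mono_set (uIcc_subset_uIcc (Icc_subset_uIcc hp) (Icc_subset_uIcc hq))
  have h0 : (0:ℝ) ∈ Icc (0:ℝ) 1 := left_mem_Icc.2 zero_le_one
  have h1 : (1:ℝ) ∈ Icc (0:ℝ) 1 := right_mem_Icc.2 zero_le_one
  have hsplit := integral_add_adjacent_intervals (hint 0 h0 u hu) (hint u hu 1 h1)
  rw [Ker, intervalIntegral.integral_sub (hint u hu 1 h1) intervalIntegrable_const]
  simp only [intervalIntegral.integral_const, smul_eq_mul, mul_one]
  linarith

lemma Ker_zero (hm : IntervalIntegrable m volume 0 1) (hnorm : ∫ v in (0:ℝ)..1, m v = 1) :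
    Ker m 0 = 0 := by
  simp [Ker_eq_sub_integral hm hnorm (left_mem_Icc.2 zero_le_one)]

lemma mul_Ker_le_mul_Ker (hm : MonotoneOn m (Icc 0 1)) (hnorm : ∫ v in (0:ℝ)..1, m v = 1)
    {t u : ℝ} (ht : 0 ≤ t) (htu : t ≤ u) (hu : u ≤ 1) : t * Ker m u ≤ u * Ker m t := by
  have hint : IntervalIntegrable m volume 0 1 :=
    (hm.mono (uIcc_of_le zero_le_one).subset).intervalIntegrable
  rw [Ker_eq_sub_integral hint hnorm ⟨ht.trans htu, hu⟩,
    Ker_eq_sub_integral hint hnorm ⟨ht, htu.trans hu⟩]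
  nlinarith [mul_integral_le_mul_integral_of_monotoneOn (hm.mono (Icc_subset_Icc_right hu)) ht htu]

lemma Ker_nonneg (hm : MonotoneOn m (Icc 0 1)) (hnorm : ∫ v in (0:ℝ)..1, m v = 1)
    {u : ℝ} (hu : u ∈ Icc (0:ℝ) 1) : 0 ≤ Ker m u := by
  simpa [Ker] using mul_Ker_le_mul_Ker hm hnorm hu.1 hu.2 le_rfl

lemma Ker_le_mul (hm : MonotoneOn m (Icc 0 1)) (hnorm : ∫ v in (0:ℝ)..1, m v = 1) {d : ℝ}
    (hd : HasDerivWithinAt (Ker m) d (Ici 0) 0) {u : ℝ} (hu : u ∈ Icc (0:ℝ) 1) :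
    Ker m u ≤ d * u := by
  have hint : IntervalIntegrable m volume 0 1 :=
    (hm.mono (uIcc_of_le zero_le_one).subset).intervalIntegrable
  rcases hu.1.eq_or_lt with rfl | hu0
  · simp [Ker_zero hint hnorm]
  have hslope : Tendsto (slope (Ker m) 0) (𝓝[>] 0) (𝓝 d) := by
    simpa [Ici_sdiff_left] using hasDerivWithinAt_iff_tendsto_slope.mp hd
  have hdiv : Ker m u / u ≤ d := by
    refine ge_of_tendsto hslope ?_
    filter_upwards [self_mem_nhdsWithin, mem_nhdsWithin_of_mem_nhds (Iio_mem_nhds hu0)]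
      with t (ht : 0 < t) (htu : t < u)
    rw [slope_def_field, Ker_zero hint hnorm, sub_zero, sub_zero,
      div_le_div_iff₀ hu0 ht]
    linarith [mul_Ker_le_mul_Ker hm hnorm ht.le htu.le hu.2]
  rwa [div_le_iff₀ hu0] at hdiv

lemma continuousOn_Ker (hm : IntervalIntegrable m volume 0 1) : ContinuousOn (Ker m) (Icc 0 1) := by
  have hint : IntegrableOn (fun v => m v - 1) (uIcc 0 1) :=
    (intervalIntegrable_iff' (μ := volume)).mp (hm.sub intervalIntegrable_const)
  have h := intervalIntegral.continuousOn_primitive_interval_left hint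
  rwa [uIcc_of_le zero_le_one] at h

end Kernel

lemma mapsTo_Icc_of_monotoneOn_of_tendsto {F : ℝ → ℝ} (hF0 : F 0 = 0)
    (hFm : MonotoneOn F (Ici 0)) (hFlim : Tendsto F atTop (𝓝 1)) :
    MapsTo F (Ici 0) (Icc 0 1) := fun x hx =>
  ⟨hF0 ▸ hFm self_mem_Ici hx hx,
    ge_of_tendsto hFlim (eventually_atTop.2 ⟨x, fun _ hy => hFm hx (mem_Ici.2 (hx.trans hy)) hy⟩)⟩

section IntervalIntegrals

variable {g : ℝ → ℝ}

lemma ContinuousOn.intervalIntegrable_of_Ici (hg : ContinuousOn g (Ici 0)) {p q : ℝ}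
    (hp : 0 ≤ p) (hq : 0 ≤ q) : IntervalIntegrable g volume p q :=
  (hg.mono fun _ hx => (le_min hp hq).trans hx.1).intervalIntegrable

lemma integral_eq_outside_add_inside (hg : ContinuousOn g (Ici 0)) {a b X : ℝ}
    (ha : 0 ≤ a) (hb : 0 ≤ b) (hX : 0 ≤ X) :
    ∫ x in 0..X, g x = (∫ x in 0..a, g x) + (∫ x in b..X, g x) + ∫ x in a..b, g x := by
  rw [← integral_add_adjacent_intervals (hg.intervalIntegrable_of_Ici le_rfl ha)
      (hg.intervalIntegrable_of_Ici ha hX),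
    ← integral_add_adjacent_intervals (hg.intervalIntegrable_of_Ici ha hb)
      (hg.intervalIntegrable_of_Ici hb hX)]
  ring

lemma integral_le_integral_add_mul_of_le_const (hg : ContinuousOn g (Ici 0)) {c a b X : ℝ}
    (hgc : ∀ x ∈ Ici 0, g x ≤ c) (ha : 0 ≤ a) (hab : a ≤ b) (hbX : b ≤ X) :
    ∫ x in 0..X, g x ≤ (∫ x in a..b, g x) + c * (X - (b - a)) := by
  have hb := ha.trans hab
  have hleft : ∫ x in 0..a, g x ≤ c * a := by
    simpa [mul_comm] using integral_mono_on ha (hg.intervalIntegrable_of_Ici le_rfl ha)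
      intervalIntegrable_const fun x hx => hgc x hx.1
  have hright : ∫ x in b..X, g x ≤ c * (X - b) := by
    simpa [mul_comm] using integral_mono_on hbX (hg.intervalIntegrable_of_Ici hb (hb.trans hbX))
      intervalIntegrable_const fun x hx => hgc x (hb.trans hx.1)
  rw [integral_eq_outside_add_inside hg ha hb (hb.trans hbX)]
  linarith

lemma integral_min_le_integral (hg : ContinuousOn g (Ici 0)) (hg0 : ∀ x ∈ Ici 0, 0 ≤ g x)
    {a b : ℝ} (ha : 0 ≤ a) (hab : a ≤ b) (X : ℝ) :
    ∫ x in min a X..min b X, g x ≤ ∫ x in a..b, g x := by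
  have hint := hg.intervalIntegrable_of_Ici ha (ha.trans hab)
  rcases le_total a X with haX | hXa
  · rw [min_eq_left haX]
    exact integral_mono_interval le_rfl (le_min hab haX) (min_le_left _ _)
      ((ae_restrict_iff' measurableSet_Ioc).2 (ae_of_all _ fun x hx => hg0 x (ha.trans hx.1.le)))
      hint
  · rw [min_eq_right hXa, min_eq_right (hXa.trans hab), integral_same]
    exact intervalIntegral.integral_nonneg hab fun x hx => hg0 x (ha.trans hx.1)

end IntervalIntegrals

structure SlopeBoundedKernel (K₀ : ℝ → ℝ) (d : ℝ) : Prop where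
  continuousOn : ContinuousOn K₀ (Icc 0 1)
  nonneg : ∀ u ∈ Icc (0:ℝ) 1, 0 ≤ K₀ u
  le_mul : ∀ u ∈ Icc (0:ℝ) 1, K₀ u ≤ d * u

lemma slopeBoundedKernel_Ker {m : ℝ → ℝ} (hm : MonotoneOn m (Icc 0 1))
    (hnorm : ∫ v in (0:ℝ)..1, m v = 1) {d : ℝ} (hd : HasDerivWithinAt (Ker m) d (Ici 0) 0) :
    SlopeBoundedKernel (Ker m) d where
  continuousOn := continuousOn_Ker (hm.mono (uIcc_of_le zero_le_one).subset).intervalIntegrable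
  nonneg _ hu := Ker_nonneg hm hnorm hu
  le_mul _ hu := Ker_le_mul hm hnorm hd hu

section ProfitBound

variable {K₀ F : ℝ → ℝ} {γ γr d xε a b : ℝ}

lemma KFull_nonneg (hγr : 0 ≤ γr) {u : ℝ} (hK : 0 ≤ K₀ u) (hu : u ≤ 1) :
    0 ≤ KFull K₀ γr u := by
  have : 0 ≤ 1 - u := by linarith
  unfold KFull
  positivity

lemma KFull_le (hγr : 0 ≤ 1 + γr) (hd : (1 + γr) * d ≤ γr) {u : ℝ} (hu : 0 ≤ u)
    (hK : K₀ u ≤ d * u) : KFull K₀ γr u ≤ γr := by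
  unfold KFull
  nlinarith [mul_le_mul_of_nonneg_left hK hγr]

lemma SlopeBoundedKernel.continuousOn_KFull_comp (hK₀ : SlopeBoundedKernel K₀ d)
    (hF : ContinuousOn F (Ici 0)) (hFI : MapsTo F (Ici 0) (Icc 0 1)) :
    ContinuousOn (fun x => KFull K₀ γr (F x)) (Ici 0) :=
  (continuousOn_const.mul (hK₀.continuousOn.comp hF hFI)).add
    (continuousOn_const.mul (continuousOn_const.sub hF))

lemma SlopeBoundedKernel.mul_integral_le_integral_KFull_add_of_le_mul
    (hK₀ : SlopeBoundedKernel K₀ d)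
    (hF : ContinuousOn F (Ici 0)) (hFI : MapsTo F (Ici 0) (Icc 0 1))
    (hint : IntegrableOn (fun x => 1 - F x) (Ioi 0)) (hγr : 0 ≤ γr) (hd : γr ≤ (1 + γr) * d)
    (hcond : d * (∫ x in Ioi xε, (1 - F x)) ≤ ∫ x in (0:ℝ)..xε, K₀ (F x))
    (ha : 0 ≤ a) (hab : a ≤ b) (hbX : b ≤ xε) :
    γr * (∫ x in Ioi 0, (1 - F x)) ≤ (∫ x in a..b, KFull K₀ γr (F x)) + γr * (xε - (b - a)) := by
  have hb := ha.trans hab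
  have hX := hb.trans hbX
  have hk : ContinuousOn (fun x => K₀ (F x)) (Ici 0) := hK₀.continuousOn.comp hF hFI
  have h1F : ContinuousOn (fun x => 1 - F x) (Ici 0) := continuousOn_const.sub hF
  have hK₀F_le : ∀ p q, 0 ≤ p → p ≤ q → ∫ x in p..q, K₀ (F x) ≤ d * ∫ x in p..q, F x :=
    fun p q hp hpq => by
      simpa using integral_mono_on hpq
        (hk.intervalIntegrable_of_Ici hp (hp.trans hpq))
        ((hF.intervalIntegrable_of_Ici hp (hp.trans hpq)).const_mul d)
        fun x hx => hK₀.le_mul _ (hFI (hp.trans hx.1))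
  have hsub : ∀ p q, 0 ≤ p → 0 ≤ q → ∫ x in p..q, (1 - F x) = (q - p) - ∫ x in p..q, F x :=
    fun p q hp hq => by
      simp [intervalIntegral.integral_sub intervalIntegrable_const
        (hF.intervalIntegrable_of_Ici hp hq)]
  set T := ∫ x in Ioi xε, (1 - F x)
  set S := (∫ x in (0:ℝ)..a, F x) + ∫ x in b..xε, F x
  set J := ∫ x in a..b, K₀ (F x)
  have hJ0 : 0 ≤ J :=
    intervalIntegral.integral_nonneg hab fun x hx => hK₀.nonneg _ (hFI (ha.trans hx.1))
  have hJ : d * (T - S) ≤ J := by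
    linarith [integral_eq_outside_add_inside hk ha hb hX, hK₀F_le 0 a le_rfl ha,
      hK₀F_le b xε hb hbX]
  have hγrJ : γr * (T - S) ≤ (1 + γr) * J := by
    rcases le_total (T - S) 0 with h | h <;> nlinarith
  have hEX : ∫ x in Ioi 0, (1 - F x) = (xε - (b - a)) + (∫ x in a..b, (1 - F x)) + (T - S) := by
    rw [← intervalIntegral.integral_interval_add_Ioi' (h1F.intervalIntegrable_of_Ici le_rfl hX)
        (hint.mono_set (Ioi_subset_Ioi hX)), integral_eq_outside_add_inside h1F ha hb hX,
      hsub 0 a le_rfl ha, hsub b xε hb hX]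
    ring
  have hKFull : ∫ x in a..b, KFull K₀ γr (F x) = (1 + γr) * J + γr * ∫ x in a..b, (1 - F x) := by
    rw [← intervalIntegral.integral_const_mul, ← intervalIntegral.integral_const_mul,
      ← intervalIntegral.integral_add ((hk.intervalIntegrable_of_Ici ha hb).const_mul _)
        ((h1F.intervalIntegrable_of_Ici ha hb).const_mul _)]
    rfl
  rw [hEX, hKFull]
  linear_combination hγrJ

lemma SlopeBoundedKernel.mul_integral_le_integral_KFull_add_of_le (hK₀ : SlopeBoundedKernel K₀ d)
    (hF : ContinuousOn F (Ici 0)) (hFI : MapsTo F (Ici 0) (Icc 0 1))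
    (hint : IntegrableOn (fun x => 1 - F x) (Ioi 0)) (hγr : 0 ≤ γr) (hγ : γ ≤ γr)
    (hG0 : γ * (∫ x in Ioi 0, (1 - F x)) ≤ ∫ x in (0:ℝ)..xε, KFull K₀ γr (F x))
    (hcond : d * (∫ x in Ioi xε, (1 - F x)) ≤ ∫ x in (0:ℝ)..xε, K₀ (F x))
    (ha : 0 ≤ a) (hab : a ≤ b) (hbX : b ≤ xε) :
    γ * (∫ x in Ioi 0, (1 - F x)) ≤ (∫ x in a..b, KFull K₀ γr (F x)) + γr * (xε - (b - a)) := by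
  rcases le_total ((1 + γr) * d) γr with hd | hd
  · refine hG0.trans (integral_le_integral_add_mul_of_le_const
      (hK₀.continuousOn_KFull_comp hF hFI) (fun x hx => ?_) ha hab hbX)
    exact KFull_le (by linarith) hd (hFI hx).1 (hK₀.le_mul _ (hFI hx))
  · have hEX : 0 ≤ ∫ x in Ioi 0, (1 - F x) :=
      setIntegral_nonneg measurableSet_Ioi fun x hx => sub_nonneg.2 (hFI (mem_Ici.2 hx.le)).2
    exact (mul_le_mul_of_nonneg_right hγ hEX).trans
      (hK₀.mul_integral_le_integral_KFull_add_of_le_mul hF hFI hint hγr hd hcond ha hab hbX)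

lemma SlopeBoundedKernel.mul_integral_le_integral_KFull_add (hK₀ : SlopeBoundedKernel K₀ d)
    (hF : ContinuousOn F (Ici 0)) (hFI : MapsTo F (Ici 0) (Icc 0 1))
    (hint : IntegrableOn (fun x => 1 - F x) (Ioi 0)) (hγr : 0 ≤ γr) (hγ : γ ≤ γr)
    (hxε : 0 ≤ xε)
    (hG0 : γ * (∫ x in Ioi 0, (1 - F x)) ≤ ∫ x in (0:ℝ)..xε, KFull K₀ γr (F x))
    (hcond : d * (∫ x in Ioi xε, (1 - F x)) ≤ ∫ x in (0:ℝ)..xε, K₀ (F x))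
    (ha : 0 ≤ a) (hab : a ≤ b) :
    γ * (∫ x in Ioi 0, (1 - F x)) ≤
      (∫ x in a..b, KFull K₀ γr (F x)) + γr * (xε - (min b xε - min a xε)) := by
  have hclamped := hK₀.mul_integral_le_integral_KFull_add_of_le hF hFI hint hγr hγ hG0 hcond
    (le_min ha hxε) (min_le_min_right xε hab) (min_le_right b xε)
  have hshrink := integral_min_le_integral (hK₀.continuousOn_KFull_comp (γr := γr) hF hFI)
    (fun x hx => KFull_nonneg hγr (hK₀.nonneg _ (hFI hx)) (hFI hx).2) ha hab xε
  linarith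

end ProfitBound

theorem truncated_stop_loss_ratio_le_VaR_general
    (F m₀ : ℝ → ℝ) (γ γr xε d0 : ℝ)
    (hγ : 0 < γ)
    (hF0 : F 0 = 0) (hFc : Continuous F) (hFm : StrictMonoOn F (Ici 0))
    (hFlim : Tendsto F atTop (nhds 1))
    (hEXint : IntegrableOn (fun x => 1 - F x) (Ioi 0))
    (hxε : 0 ≤ xε)
    (hm₀mono : MonotoneOn m₀ (Icc 0 1))
    (hm₀norm : (∫ v in (0:ℝ)..1, m₀ v) = 1)
    (hγr : γ ≤ γr)
    (hG0 : Profit γ (∫ x in Ioi (0:ℝ), (1 - F x)) (KFull (Ker m₀) γr) F (Iab 0 xε) ≤ 0)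
    (hd0 : HasDerivWithinAt (Ker m₀) d0 (Ici 0) 0)
    (hcond : d0 * (∫ x in Ioi xε, (1 - F x)) ≤ ∫ x in (0:ℝ)..xε, Ker m₀ (F x))
 :
    ∀ a b : ℝ, 0 ≤ a → a ≤ b → 0 < VaRRet (Iab a b) xε →
      Profit γ (∫ x in Ioi (0:ℝ), (1 - F x)) (KFull (Ker m₀) γr) F (Iab a b) / VaRRet (Iab a b) xε ≤ γr := by
  intro a b ha hab hV
  rw [Profit_Iab _ _ _ _ le_rfl hxε] at hG0
  rw [div_le_iff₀ hV, Profit_Iab _ _ _ _ ha hab, VaRRet, Iab_eq_min_sub_min hab]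
  have := (slopeBoundedKernel_Ker hm₀mono hm₀norm hd0).mul_integral_le_integral_KFull_add
    hFc.continuousOn (mapsTo_Icc_of_monotoneOn_of_tendsto hF0 hFm.monotoneOn hFlim) hEXint
    (hγ.le.trans hγr) hγr hxε (by linarith) hcond ha hab
  linarith

/-- Lemma 1 (VaR): under the normalized monotone market factor model with
`γ_r ≥ γ`, `xε ≥ E(X)`, `G(I_{0 xε}) ≤ 0` and condition (e33), the VaR-ratio
of every truncated stop loss contract is at most `γ_r`. -/
theorem truncated_stop_loss_ratio_le_VaR
    (F m₀ : ℝ → ℝ) (γ γr ε xε d0 : ℝ)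
    (hγ : 0 < γ) (hε : ε ∈ Ioo (0:ℝ) 1)
    (hF0 : F 0 = 0) (hFc : Continuous F) (hFm : StrictMonoOn F (Ici 0))
    (hFlim : Tendsto F atTop (nhds 1))
    (hEXint : IntegrableOn (fun x => 1 - F x) (Ioi 0))
    (hxε : 0 ≤ xε) (hq : F xε = 1 - ε)
    (hm₀nn : ∀ v ∈ Icc (0:ℝ) 1, 0 ≤ m₀ v)
    (hm₀int : IntervalIntegrable m₀ volume 0 1)
    (hm₀mono : MonotoneOn m₀ (Icc 0 1))
    (hm₀norm : (∫ v in (0:ℝ)..1, m₀ v) = 1)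
    (hγr : γ ≤ γr)
    (hxεEX : (∫ x in Ioi (0:ℝ), (1 - F x)) ≤ xε)
    (hG0 : Profit γ (∫ x in Ioi (0:ℝ), (1 - F x)) (KFull (Ker m₀) γr) F (Iab 0 xε) ≤ 0)
    (hd0 : HasDerivWithinAt (Ker m₀) d0 (Ici 0) 0)
    (hcond : d0 * (∫ x in Ioi xε, (1 - F x)) ≤ ∫ x in (0:ℝ)..xε, Ker m₀ (F x))
 :
    ∀ a b : ℝ, 0 ≤ a → a ≤ b → 0 < VaRRet (Iab a b) xε →
      Profit γ (∫ x in Ioi (0:ℝ), (1 - F x)) (KFull (Ker m₀) γr) F (Iab a b) / VaRRet (Iab a b) xε ≤ γr :=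
  truncated_stop_loss_ratio_le_VaR_general F m₀ γ γr xε d0 hγ hF0 hFc hFm hFlim hEXint hxε hm₀mono
    hm₀norm hγr hG0 hd0 hcond
end

section
/- The optimization problem is scale invariant: let ξ > 0, let F₁ be a continuous strictly increasing distribution function on [0,∞) with unit mean, and set F_ξ(x) = F₁(x/ξ). For an admissible I₁ define I_ξ(x) = ξ·I₁(x/ξ). Then the insurer's expected profit satisfies G_ξ(I_ξ) = ξ·G₁(I₁), the Value at Risk satisfies VaR_ξ(R_{I_ξ}) = ξ·VaR₁(R_{I₁}), and consequently the VaR-ratio is invariant: C_ξ(I_ξ) = C₁(I₁). Moreover I_ξ is admissible if and only if I₁ is, and if I₁ = I_{ab} is a truncated stop loss contract then I_ξ is the truncated stop loss contract with cut-offs ξa, ξb. -/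
open MeasureTheory Set Filter

lemma deriv_scale (ξ : ℝ) (hξ : ξ ≠ 0) (f : ℝ → ℝ) (x : ℝ) :
    deriv (fun x => ξ * f (x / ξ)) x = deriv f (x / ξ) := by
  by_cases h : DifferentiableAt ℝ f (x / ξ)
  · have h1 : HasDerivAt (fun x : ℝ => x / ξ) (1 / ξ) x := by
      simpa using (hasDerivAt_id x).div_const ξ
    have h2 := (h.hasDerivAt.comp x h1).const_mul ξ
    have h3 : HasDerivAt (fun x => ξ * f (x / ξ)) (deriv f (x / ξ)) x := by
      have : ξ * (deriv f (x / ξ) * (1 / ξ)) = deriv f (x / ξ) := by field_simp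
      exact this ▸ h2
    exact h3.deriv
  · have h2 : ¬ DifferentiableAt ℝ (fun x => ξ * f (x / ξ)) x := by
      intro hg
      set g := fun x => ξ * f (x / ξ) with hgdef
      have hx : ξ * (x / ξ) = x := by field_simp
      have hfeq : f = fun y => ξ⁻¹ * g (ξ * y) := by
        funext y; simp only [hgdef]; field_simp
      have h1 : HasDerivAt (fun y : ℝ => ξ * y) ξ (x / ξ) := by
        simpa using (hasDerivAt_id (x / ξ)).const_mul ξ
      have hg' : HasDerivAt g (deriv g x) (ξ * (x / ξ)) := by
        rw [hx]; exact hg.hasDerivAt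
      have hd := ((hg'.comp (x / ξ) h1).const_mul ξ⁻¹).differentiableAt
      exact h (by rw [hfeq]; exact hd)
    rw [deriv_zero_of_not_differentiableAt h, deriv_zero_of_not_differentiableAt h2]

lemma comp_div_Ioi (g : ℝ → ℝ) (ξ : ℝ) (hξ : 0 < ξ) :
    (∫ x in Ioi (0:ℝ), g (x / ξ)) = ξ * ∫ x in Ioi (0:ℝ), g x := by
  have := integral_comp_mul_left_Ioi g 0 (inv_pos.mpr hξ)
  simp only [mul_zero, inv_inv, smul_eq_mul] at this
  simpa [div_eq_inv_mul] using this

/-- Scale invariance of the optimization problem: rescaling the risk by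
`ξ > 0` rescales profit and VaR by `ξ`, leaves the VaR-ratio invariant,
preserves admissibility, and maps truncated stop loss contracts to truncated
stop loss contracts with rescaled cut-off points. -/
theorem scale_invariance
    (ξ γ ε xε1 : ℝ) (F₁ m I₁ : ℝ → ℝ)
    (hξ : 0 < ξ) (hγ : 0 < γ) (hε : ε ∈ Ioo (0:ℝ) 1)
    (hF₁0 : F₁ 0 = 0) (hF₁c : Continuous F₁) (hF₁m : StrictMonoOn F₁ (Ici 0))
    (hF₁lim : Tendsto F₁ atTop (nhds 1))
    (hEXint : IntegrableOn (fun x => 1 - F₁ x) (Ioi 0))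
    (hmean : (∫ x in Ioi (0:ℝ), (1 - F₁ x)) = 1)
    (hxε1 : 0 ≤ xε1) (hq : F₁ xε1 = 1 - ε)
    (hmint : IntervalIntegrable m volume 0 1)
    (hI₁ : Admissible I₁) :
    (∫ x in Ioi (0:ℝ), (1 - F₁ (x / ξ))) = ξ ∧
    Profit γ ξ (Ker m) (fun x => F₁ (x / ξ)) (fun x => ξ * I₁ (x / ξ))
      = ξ * Profit γ 1 (Ker m) F₁ I₁ ∧
    VaRRet (fun x => ξ * I₁ (x / ξ)) (ξ * xε1) = ξ * VaRRet I₁ xε1 ∧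
    Profit γ ξ (Ker m) (fun x => F₁ (x / ξ)) (fun x => ξ * I₁ (x / ξ))
        / VaRRet (fun x => ξ * I₁ (x / ξ)) (ξ * xε1)
      = Profit γ 1 (Ker m) F₁ I₁ / VaRRet I₁ xε1 ∧
    (Admissible (fun x => ξ * I₁ (x / ξ)) ↔ Admissible I₁) ∧
    (∀ a b : ℝ, 0 ≤ a → a ≤ b → I₁ = Iab a b →
      (fun x => ξ * I₁ (x / ξ)) = Iab (ξ * a) (ξ * b)) := by
  have hξ' : ξ ≠ 0 := hξ.ne'
  have hmass : (∫ x in Ioi (0:ℝ), (1 - F₁ (x / ξ))) = ξ := by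
    rw [comp_div_Ioi (fun y => 1 - F₁ y) ξ hξ, hmean, mul_one]
  have hP : Profit γ ξ (Ker m) (fun x => F₁ (x / ξ)) (fun x => ξ * I₁ (x / ξ))
      = ξ * Profit γ 1 (Ker m) F₁ I₁ := by
    unfold Profit
    have hint : (∫ x in Ioi (0:ℝ), Ker m (F₁ (x / ξ)) * deriv (fun x => ξ * I₁ (x / ξ)) x)
        = ξ * ∫ x in Ioi (0:ℝ), Ker m (F₁ x) * deriv I₁ x := by
      simp_rw [deriv_scale ξ hξ' I₁]
      exact comp_div_Ioi (fun y => Ker m (F₁ y) * deriv I₁ y) ξ hξ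
    simp only at hint ⊢
    rw [hint]; ring
  have hxx : ξ * xε1 / ξ = xε1 := by field_simp
  have hV : VaRRet (fun x => ξ * I₁ (x / ξ)) (ξ * xε1) = ξ * VaRRet I₁ xε1 := by
    unfold VaRRet
    simp only [hxx]; ring
  refine ⟨hmass, hP, hV, ?_, ?_, ?_⟩
  · rw [hP, hV, mul_div_mul_left _ _ hξ']
  · constructor
    · intro hA
      constructor
      · intro x hx
        obtain ⟨h1, h2⟩ := hA.1 (ξ * x) (by positivity)
        simp only [mul_div_cancel_left₀ x hξ'] at h1 h2
        constructor
        · nlinarith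
        · nlinarith
      · intro x₁ x₂ hx₁ h12
        obtain ⟨h1, h2⟩ := hA.2 (ξ * x₁) (ξ * x₂) (by positivity)
          (by nlinarith)
        simp only [mul_div_cancel_left₀ x₁ hξ', mul_div_cancel_left₀ x₂ hξ'] at h1 h2
        constructor
        · nlinarith
        · nlinarith
    · intro hA
      constructor
      · intro x hx
        obtain ⟨h1, h2⟩ := hA.1 (x / ξ) (by positivity)
        have hxd : ξ * (x / ξ) = x := by field_simp
        constructor
        · positivity
        · nlinarith
      · intro x₁ x₂ hx₁ h12
        obtain ⟨h1, h2⟩ := hA.2 (x₁ / ξ) (x₂ / ξ) (by positivity) (by gcongr)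
        have hd1 : ξ * (x₁ / ξ) = x₁ := by field_simp
        have hd2 : ξ * (x₂ / ξ) = x₂ := by field_simp
        constructor
        · nlinarith
        · nlinarith
  · intro a b ha hab hI
    funext x
    simp only [hI, Iab]
    rw [mul_min_of_nonneg _ _ hξ.le, mul_max_of_nonneg _ _ hξ.le]
    have e1 : ξ * (x / ξ - a) = x - ξ * a := by field_simp
    rw [e1, mul_zero, mul_sub]
end

section
/- Suppose K : [0,1] → ℝ is concave with K(1) = 0 and K(0) = γ_r, that γ_r ≥ γ, x_ε ≥ E(X), and G(I_{0 x_ε}) ≤ 0. Then for every b with 0 ≤ b < x_ε, the VaR-ratio of the truncated stop loss contract I_{0b} satisfies C_VaR(I_{0b}) = (γE(X) − ∫₀^b K(F(x)) dx) / (x_ε − b) ≤ γ_r. -/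
open MeasureTheory Set Filter

/-!
With `φ = K ∘ F`, the ratio of `I_{0b}` is `(γ E(X) - ∫₀^b φ) / (x_ε - b)`. Since `K` is concave
with `K 0 = γ_r` and `F` is increasing, `φ` can cross the level `γ_r` only once, downwards. So
either `φ ≥ γ_r` on `[0, b]`, and `γ E(X) ≤ γ_r x_ε` gives the bound, or `φ ≤ γ_r` on `[b, x_ε]`,
and `G(I_{0 x_ε}) ≤ 0`, i.e. `γ E(X) ≤ ∫₀^{x_ε} φ`, gives it.
-/

lemma deriv_Iab_zero_of_mem_Ioo {c x : ℝ} (hx : x ∈ Ioo 0 c) : deriv (Iab 0 c) x = 1 := by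
  have h : Iab 0 c =ᶠ[nhds x] id := by
    filter_upwards [Ioo_mem_nhds hx.1 hx.2] with y hy
    simp only [Iab, sub_zero, id_eq, max_eq_left hy.1.le, min_eq_left hy.2.le]
  rw [h.deriv_eq, deriv_id]

lemma deriv_Iab_zero_of_lt {c x : ℝ} (hc : 0 ≤ c) (hx : c < x) : deriv (Iab 0 c) x = 0 := by
  have h : Iab 0 c =ᶠ[nhds x] fun _ => c := by
    filter_upwards [Ioi_mem_nhds hx] with y (hy : c < y)
    simp only [Iab, sub_zero, max_eq_left (hc.trans hy.le), min_eq_right hy.le]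
  rw [h.deriv_eq, deriv_const]

lemma setIntegral_mul_deriv_Iab_zero (g : ℝ → ℝ) {c : ℝ} (hc : 0 ≤ c) :
    ∫ x in Ioi 0, g x * deriv (Iab 0 c) x = ∫ x in 0..c, g x := by
  have hae : (fun x => g x * deriv (Iab 0 c) x) =ᵐ[volume.restrict (Ioi 0)]
      (Ioo 0 c).indicator g := by
    refine (ae_restrict_iff' measurableSet_Ioi).mpr ?_
    filter_upwards [volume.ae_ne c] with x hxc (hx0 : 0 < x)
    rcases lt_or_gt_of_ne hxc with hlt | hgt
    · have hx : x ∈ Ioo 0 c := ⟨hx0, hlt⟩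
      rw [deriv_Iab_zero_of_mem_Ioo hx, indicator_of_mem hx, mul_one]
    · rw [deriv_Iab_zero_of_lt hc hgt, indicator_of_notMem fun h => h.2.not_gt hgt, mul_zero]
  rw [integral_congr_ae hae, integral_indicator measurableSet_Ioo,
    Measure.restrict_restrict measurableSet_Ioo, inter_eq_left.mpr Ioo_subset_Ioi_self,
    intervalIntegral.integral_of_le hc, integral_Ioc_eq_integral_Ioo]

lemma Profit_Iab_zero (γ EX : ℝ) (K F : ℝ → ℝ) {c : ℝ} (hc : 0 ≤ c) :
    Profit γ EX K F (Iab 0 c) = γ * EX - ∫ x in 0..c, K (F x) := by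
  rw [Profit, setIntegral_mul_deriv_Iab_zero _ hc]

lemma VaRRet_Iab_zero {b xε : ℝ} (hb : 0 ≤ b) (hbx : b ≤ xε) :
    VaRRet (Iab 0 b) xε = xε - b := by
  simp only [VaRRet, Iab, sub_zero, max_eq_left (hb.trans hbx), min_eq_right hbx]

/-- The upper bound comes from reflecting `z` through the midpoint of `[a, b]`:
`f z + f (a + b - z) ≤ 2 f ((a + b) / 2)`. -/
lemma ConcaveOn.exists_abs_le_of_Icc {f : ℝ → ℝ} {a b : ℝ} (hf : ConcaveOn ℝ (Icc a b) f) :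
    ∃ C, ∀ z ∈ Icc a b, |f z| ≤ C := by
  rcases lt_or_ge b a with hba | hab
  · exact ⟨0, fun z hz => absurd (hz.1.trans hz.2) hba.not_ge⟩
  set m := min (f a) (f b)
  have hlow : ∀ z ∈ Icc a b, m ≤ f z := fun z hz =>
    hf.min_le_of_mem_Icc (left_mem_Icc.mpr hab) (right_mem_Icc.mpr hab) hz
  refine ⟨max (2 * f ((a + b) / 2) - m) (-m), fun z hz => ?_⟩
  have hz' : a + b - z ∈ Icc a b := ⟨by linarith [hz.2], by linarith [hz.1]⟩
  have hmid := hf.2 hz hz' (by norm_num : (0:ℝ) ≤ 1 / 2) (by norm_num : (0:ℝ) ≤ 1 / 2)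
    (by norm_num)
  have hm : (1 / 2 : ℝ) • z + (1 / 2 : ℝ) • (a + b - z) = (a + b) / 2 := by
    simp only [smul_eq_mul]; ring
  rw [hm, smul_eq_mul, smul_eq_mul] at hmid
  have := hlow z hz
  have := hlow _ hz'
  rw [abs_le]
  constructor <;> cases max_cases (2 * f ((a + b) / 2) - m) (-m) <;> linarith

lemma intervalIntegrable_comp_of_concaveOn {K F : ℝ → ℝ} {p q a b : ℝ}
    (hK : ConcaveOn ℝ (Icc p q) K) (hF : ContinuousOn F (Ioc a b))
    (hFab : MapsTo F (Ioc a b) (Ioo p q)) (hab : a ≤ b) :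
    IntervalIntegrable (fun x => K (F x)) volume a b := by
  have hKc : ContinuousOn K (Ioo p q) := by
    simpa only [interior_Icc] using hK.continuousOn_interior
  obtain ⟨C, hC⟩ := hK.exists_abs_le_of_Icc
  rw [intervalIntegrable_iff_integrableOn_Ioc_of_le hab]
  refine IntegrableOn.of_bound measure_Ioc_lt_top
    ((hKc.comp hF hFab).aestronglyMeasurable measurableSet_Ioc) C ?_
  exact (ae_restrict_iff' measurableSet_Ioc).mpr
    (ae_of_all _ fun x hx => hC _ (Ioo_subset_Icc_self (hFab hx)))

lemma ConcaveOn.forall_le_or_forall_le {f : ℝ → ℝ} {s : Set ℝ} {a u : ℝ} (hf : ConcaveOn ℝ s f)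
    (ha : a ∈ s) (hu : u ∈ s) (hau : a ≤ u) :
    (∀ v ∈ Icc a u, f a ≤ f v) ∨ ∀ v ∈ s, u ≤ v → f v ≤ f a := by
  by_cases hfau : f a ≤ f u
  · exact .inl fun v hv => (min_eq_left hfau).symm.trans_le (hf.min_le_of_mem_Icc ha hu hv)
  · refine .inr fun v hv huv => ?_
    by_contra! hfav
    exact hfau ((min_eq_left hfav.le).symm.trans_le (hf.min_le_of_mem_Icc ha hv ⟨hau, huv⟩))

lemma sub_integral_le_mul_sub {φ : ℝ → ℝ} {P c a b x : ℝ} (hab : a ≤ b) (hbx : b ≤ x)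
    (hφ : IntervalIntegrable φ volume a x) (hPc : P ≤ c * (x - a)) (hPφ : P ≤ ∫ t in a..x, φ t)
    (hcross : (∀ t ∈ Icc a b, c ≤ φ t) ∨ ∀ t ∈ Icc b x, φ t ≤ c) :
    P - ∫ t in a..b, φ t ≤ c * (x - b) := by
  have hb : b ∈ uIcc a x := mem_uIcc_of_le hab hbx
  have hφab : IntervalIntegrable φ volume a b := hφ.mono_set (uIcc_subset_uIcc_left hb)
  have hφbx : IntervalIntegrable φ volume b x := hφ.mono_set (uIcc_subset_uIcc_right hb)
  rw [← intervalIntegral.integral_add_adjacent_intervals hφab hφbx] at hPφ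
  rcases hcross with hlow | hhigh
  · have := intervalIntegral.integral_mono_on hab intervalIntegrable_const hφab hlow
    rw [intervalIntegral.integral_const, smul_eq_mul] at this
    linarith
  · have := intervalIntegral.integral_mono_on hbx hφbx intervalIntegrable_const hhigh
    rw [intervalIntegral.integral_const, smul_eq_mul] at this
    linarith

theorem lower_layer_ratio_le_general
    (F K : ℝ → ℝ) (γ γr ε xε : ℝ)
    (hγ : 0 < γ) (hε : ε ∈ Ioo (0:ℝ) 1)
    (hF0 : F 0 = 0) (hFc : Continuous F) (hFm : StrictMonoOn F (Ici 0))
    (hq : F xε = 1 - ε)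
    (hKconc : ConcaveOn ℝ (Icc 0 1) K)
    (hK0 : K 0 = γr)
    (hγr : γ ≤ γr)
    (hxεEX : (∫ x in Ioi (0:ℝ), (1 - F x)) ≤ xε)
    (hG0 : Profit γ (∫ x in Ioi (0:ℝ), (1 - F x)) K F (Iab 0 xε) ≤ 0) :
    ∀ b : ℝ, 0 ≤ b → b < xε →
      Profit γ (∫ x in Ioi (0:ℝ), (1 - F x)) K F (Iab 0 b) / VaRRet (Iab 0 b) xε
          = (γ * (∫ x in Ioi (0:ℝ), (1 - F x)) - ∫ x in (0:ℝ)..b, K (F x)) / (xε - b) ∧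
        (γ * (∫ x in Ioi (0:ℝ), (1 - F x)) - ∫ x in (0:ℝ)..b, K (F x)) / (xε - b) ≤ γr := by
  intro b hb hbx
  have hxε : 0 ≤ xε := hb.trans hbx.le
  have hε1 : 1 - ε ≤ 1 := by linarith [hε.1]
  have hFmono : MonotoneOn F (Ici 0) := hFm.monotoneOn
  have hF_Icc : ∀ x ∈ Icc 0 xε, F x ∈ Icc 0 (1 - ε) := fun x hx =>
    ⟨hF0 ▸ hFmono self_mem_Ici hx.1 hx.1, hq ▸ hFmono hx.1 hxε hx.2⟩
  have hF_Ioc : MapsTo F (Ioc 0 xε) (Ioo 0 1) := fun x hx =>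
    ⟨hF0 ▸ hFm self_mem_Ici hx.1.le hx.1,
      (hF_Icc x (Ioc_subset_Icc_self hx)).2.trans_lt (by linarith [hε.1])⟩
  have hcross := hKconc.forall_le_or_forall_le (left_mem_Icc.mpr zero_le_one)
    (Icc_subset_Icc_right hε1 (hF_Icc b ⟨hb, hbx.le⟩)) (hF_Icc b ⟨hb, hbx.le⟩).1
  have hEX : γ * (∫ x in Ioi (0:ℝ), (1 - F x)) ≤ γr * (xε - 0) := by
    rw [sub_zero]
    exact (mul_le_mul_of_nonneg_left hxεEX hγ.le).trans (mul_le_mul_of_nonneg_right hγr hxε)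
  rw [Profit_Iab_zero _ _ _ _ hxε, sub_nonpos] at hG0
  refine ⟨by rw [Profit_Iab_zero _ _ _ _ hb, VaRRet_Iab_zero hb hbx.le], ?_⟩
  rw [div_le_iff₀ (sub_pos.mpr hbx)]
  refine sub_integral_le_mul_sub hb hbx.le
    (intervalIntegrable_comp_of_concaveOn hKconc hFc.continuousOn hF_Ioc hxε) hEX hG0
    (hcross.imp (fun h t ht => hK0 ▸ h _ ?_) fun h t ht => hK0 ▸ h _ ?_ ?_)
  · exact ⟨(hF_Icc t ⟨ht.1, ht.2.trans hbx.le⟩).1, hFmono ht.1 hb ht.2⟩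
  · exact Icc_subset_Icc_right hε1 (hF_Icc t ⟨hb.trans ht.1, ht.2⟩)
  · exact hFmono hb (hb.trans ht.1) ht.1

/-- The auxiliary inequality (e54a): under `γ_r ≥ γ`, `xε ≥ E(X)` and
`G(I_{0 xε}) ≤ 0`, every contract `I_{0b}` with `0 ≤ b < xε` has VaR-ratio
`(γ E(X) - ∫_0^b K(F x) dx)/(xε - b) ≤ γ_r`. -/
theorem lower_layer_ratio_le
    (F K : ℝ → ℝ) (γ γr ε xε : ℝ)
    (hγ : 0 < γ) (hε : ε ∈ Ioo (0:ℝ) 1)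
    (hF0 : F 0 = 0) (hFc : Continuous F) (hFm : StrictMonoOn F (Ici 0))
    (hFlim : Tendsto F atTop (nhds 1))
    (hEXint : IntegrableOn (fun x => 1 - F x) (Ioi 0))
    (hxε : 0 ≤ xε) (hq : F xε = 1 - ε)
    (hKconc : ConcaveOn ℝ (Icc 0 1) K)
    (hK1 : K 1 = 0) (hK0 : K 0 = γr)
    (hγr : γ ≤ γr)
    (hxεEX : (∫ x in Ioi (0:ℝ), (1 - F x)) ≤ xε)
    (hG0 : Profit γ (∫ x in Ioi (0:ℝ), (1 - F x)) K F (Iab 0 xε) ≤ 0) :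
    ∀ b : ℝ, 0 ≤ b → b < xε →
      Profit γ (∫ x in Ioi (0:ℝ), (1 - F x)) K F (Iab 0 b) / VaRRet (Iab 0 b) xε
          = (γ * (∫ x in Ioi (0:ℝ), (1 - F x)) - ∫ x in (0:ℝ)..b, K (F x)) / (xε - b) ∧
        (γ * (∫ x in Ioi (0:ℝ), (1 - F x)) - ∫ x in (0:ℝ)..b, K (F x)) / (xε - b) ≤ γr :=
  lower_layer_ratio_le_general F K γ γr ε xε hγ hε hF0 hFc hFm hq hKconc hK0 hγr hxεEX hG0
end

section
/- Let X be a nonnegative random variable with continuous strictly increasing distribution function F on [0,∞), fix ε ∈ (0,1), and let x_ε = F⁻¹(1−ε). If I : [0,∞) → ℝ satisfies 0 ≤ I(x) ≤ x and 0 ≤ I(x₂)−I(x₁) ≤ x₂−x₁ for all 0 ≤ x₁ ≤ x₂, then the Value at Risk at level ε of the retained risk R_I(X) = X − I(X) satisfies VaR(R_I) := inf{t : P(X − I(X) > t) ≤ ε} = x_ε − I(x_ε). -/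
open MeasureTheory Set Filter

/-- VaR of the retained risk: since `x ↦ x - I(x)` is nondecreasing and
1-Lipschitz, `VaR(R_I) = inf {t : P(X - I(X) > t) ≤ ε} = xε - I(xε)`. -/
theorem VaR_retained
    {Ω : Type*} [MeasurableSpace Ω] (μ : Measure Ω) [IsProbabilityMeasure μ]
    (X : Ω → ℝ) (hX : Measurable X) (hXnn : ∀ ω, 0 ≤ X ω)
    (F : ℝ → ℝ) (hF : ∀ x, (μ {ω | X ω ≤ x}).toReal = F x)
    (hFc : Continuous F) (hFm : StrictMonoOn F (Ici 0))
    (ε xε : ℝ) (hε : ε ∈ Ioo (0:ℝ) 1) (hxε : 0 ≤ xε) (hq : F xε = 1 - ε)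
    (I : ℝ → ℝ) (hI : Admissible I) :
    sInf {t : ℝ | (μ {ω | t < X ω - I (X ω)}).toReal ≤ ε} = xε - I xε := by

  obtain ⟨hnn, hslope⟩ := hI
  set R : ℝ → ℝ := fun x => x - I x with hR
  have hRmono : ∀ x₁ x₂, 0 ≤ x₁ → x₁ ≤ x₂ → R x₁ ≤ R x₂ := by
    intro x₁ x₂ h1 h12
    have := (hslope x₁ x₂ h1 h12).2
    simp only [hR]; linarith
  have hRlip : ∀ x₁ x₂, 0 ≤ x₁ → x₁ ≤ x₂ → R x₂ - R x₁ ≤ x₂ - x₁ := by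
    intro x₁ x₂ h1 h12
    have := (hslope x₁ x₂ h1 h12).1
    simp only [hR]; linarith
  have hRnn : ∀ x, 0 ≤ x → 0 ≤ R x := by
    intro x hx; have := (hnn x hx).2; simp only [hR]; linarith
  have hFle : ∀ x : ℝ, μ {ω | X ω ≤ x} ≤ 1 := fun x => prob_le_one
  -- measure of upper tail of X
  have htail : ∀ x : ℝ, (μ {ω | x < X ω}).toReal = 1 - F x := by
    intro x
    have hms : MeasurableSet {ω | X ω ≤ x} := hX measurableSet_Iic
    have hc : {ω | x < X ω} = {ω | X ω ≤ x}ᶜ := by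
      ext ω; simp [not_le]
    rw [hc, prob_compl_eq_one_sub hms, ENNReal.toReal_sub_of_le (hFle x) ENNReal.one_ne_top]
    simp [hF x]
  have hεε := hε.1
  have hε1 := hε.2
  -- the set
  set S : Set ℝ := {t : ℝ | (μ {ω | t < X ω - I (X ω)}).toReal ≤ ε} with hS
  have hmem : xε - I xε ∈ S := by
    have hsub : {ω | xε - I xε < X ω - I (X ω)} ⊆ {ω | xε < X ω} := by
      intro ω hω
      simp only [mem_setOf_eq] at hω ⊢
      by_contra hle
      push_neg at hle
      have := hRmono (X ω) xε (hXnn ω) hle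
      simp only [hR] at this
      linarith
    have h1 : (μ {ω | xε - I xε < X ω - I (X ω)}).toReal ≤ (μ {ω | xε < X ω}).toReal :=
      ENNReal.toReal_mono (by finiteness) (measure_mono hsub)
    calc (μ {ω | xε - I xε < X ω - I (X ω)}).toReal
        ≤ (μ {ω | xε < X ω}).toReal := h1
      _ = 1 - F xε := htail xε
      _ = ε := by rw [hq]; ring
  have hlb : ∀ t ∈ S, xε - I xε ≤ t := by
    intro t ht
    by_contra hlt
    push_neg at hlt
    -- t < R xε
    have hδ : 0 < R xε - t := by simp only [hR]; linarith
    set δ := R xε - t with hδdef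
    -- choose x' < xε (or 0 if xε = 0)
    rcases eq_or_lt_of_le hxε with hx0 | hx0
    · -- xε = 0 : R 0 = 0, so t < 0 and the event is everything
      have hI0 : I 0 = 0 := le_antisymm (by simpa using (hnn 0 le_rfl).2) (hnn 0 le_rfl).1
      have ht0 : t < 0 := by
        have h0 : R xε = 0 := by rw [← hx0]; simp [hR, hI0]
        rw [hδdef, h0] at hδ; linarith
      have huniv : {ω | t < X ω - I (X ω)} = univ := by
        ext ω
        simp only [mem_setOf_eq, mem_univ, iff_true]
        have := hRnn (X ω) (hXnn ω)
        simp only [hR] at this; linarith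
      rw [hS] at ht
      simp only [mem_setOf_eq, huniv, measure_univ, ENNReal.toReal_one] at ht
      linarith
    · set x' := max 0 (xε - δ/2) with hx'
      have hx'0 : 0 ≤ x' := le_max_left _ _
      have hx'lt : x' < xε := by
        rw [hx']
        exact max_lt hx0 (by linarith)
      have hx'ge : xε - δ/2 ≤ x' := le_max_right _ _
      have hRx' : t < R x' := by
        have := hRlip x' xε hx'0 hx'lt.le
        linarith
      have hsub : {ω | X ω ≤ x'}ᶜ ⊆ {ω | t < X ω - I (X ω)} := by
        intro ω hω
        simp only [mem_compl_iff, mem_setOf_eq, not_le] at hω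
        have := hRmono x' (X ω) hx'0 hω.le
        simp only [hR] at this hRx'
        show t < X ω - I (X ω)
        linarith
      have hms : MeasurableSet {ω | X ω ≤ x'} := hX measurableSet_Iic
      have h1 : (μ {ω | X ω ≤ x'}ᶜ).toReal ≤ (μ {ω | t < X ω - I (X ω)}).toReal :=
        ENNReal.toReal_mono (by finiteness) (measure_mono hsub)
      have h2 : (μ {ω | X ω ≤ x'}ᶜ).toReal = 1 - F x' := by
        rw [prob_compl_eq_one_sub hms, ENNReal.toReal_sub_of_le (hFle x') ENNReal.one_ne_top]
        simp [hF x']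
      have h3 : F x' < F xε := hFm hx'0 hxε hx'lt
      rw [hS] at ht
      simp only [mem_setOf_eq] at ht
      rw [hq] at h3
      linarith
  exact le_antisymm (csInf_le ⟨xε - I xε, hlb⟩ hmem) (le_csInf ⟨_, hmem⟩ hlb)
end

section
/- Let F be a continuous strictly increasing distribution function on [0,∞), let K₀ : [0,1] → [0,∞) be concave with K₀(0) = K₀(1) = 0, fix x_ε > 0, and let a : [γ̲, γ̄] → [0, x_ε] be differentiable and nonincreasing, satisfying for every γ ∈ [γ̲, γ̄] the equation K₀(F(a(γ))) = (γ/(1+γ)) F(a(γ)). Define H(γ) = (1+γ) ∫_{a(γ)}^{x_ε} K₀(F(x)) dx + γ ∫_{a(γ)}^{x_ε} (1 − F(x)) dx + γ·a(γ). Then H is differentiable with H′(γ) = ∫_{a(γ)}^{x_ε} K₀(F(x)) dx + ∫_{a(γ)}^{x_ε} (1 − F(x)) dx + a(γ), H′ is nonincreasing (indeed dH′/dγ = (F(a(γ))/(1+γ)) · a′(γ) ≤ 0 where a is twice differentiable), and hence H is concave on [γ̲, γ̄]. -/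
/-!
Along the curve `y = a(γ)` the cut-off is critical for `H(y; γ)`: the first-order condition
`(1 + γ) K₀(F(y)) = γ F(y)` makes the `y`-derivative vanish, so by the envelope theorem
`H'(γ)` is the partial derivative in `γ`, namely `M(a(γ))` with
`M(y) = ∫_y^{xε} K₀(F) + ∫_y^{xε} (1 - F) + y`. Since `M'(y) = F(y) - K₀(F(y))`, which the
first-order condition shows to be nonnegative on the range of `a`, `M` is nondecreasing there
and `M ∘ a` is nonincreasing because `a` is. An antitone derivative gives concavity.
-/

open Set

theorem concaveOn_of_hasDerivWithinAt_of_antitoneOn {D : Set ℝ} (hD : Convex ℝ D) {f f' : ℝ → ℝ}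
    (hf : ∀ x ∈ D, HasDerivWithinAt f (f' x) D x) (hf' : AntitoneOn f' D) :
    ConcaveOn ℝ D f := by
  have hderiv : ∀ x ∈ interior D, HasDerivAt f (f' x) x := fun x hx =>
    (hf x (interior_subset hx)).hasDerivAt (mem_interior_iff_mem_nhds.1 hx)
  refine AntitoneOn.concaveOn_of_deriv hD (fun x hx => (hf x hx).continuousWithinAt)
    (fun x hx => (hderiv x hx).differentiableAt.differentiableWithinAt) ?_
  intro x hx y hy hxy
  rw [(hderiv x hx).deriv, (hderiv y hy).deriv]
  exact hf' (interior_subset hx) (interior_subset hy) hxy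

section IntervalIntegral

variable {E : Type*} [NormedAddCommGroup E] [NormedSpace ℝ E] [CompleteSpace E]

theorem HasDerivWithinAt.intervalIntegral_left {f : ℝ → E} {a : ℝ → ℝ} {s : Set ℝ}
    {a' b c g : ℝ} (hf : ContinuousOn f (Ici c)) (hcb : c ≤ b) (has : MapsTo a s (Ici c))
    (ha : HasDerivWithinAt a a' s g) (hg : g ∈ s) :
    HasDerivWithinAt (fun t => ∫ x in a t..b, f x) (a' • -f (a g)) s g := by
  set fc : ℝ → E := fun x => f (max c x)
  have hfc : Continuous fc :=
    hf.comp_continuous (continuous_const.max continuous_id) fun x => le_max_left c x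
  have hfc_eq : ∀ y ∈ Ici c, (∫ x in y..b, fc x) = ∫ x in y..b, f x := fun y hy =>
    intervalIntegral.integral_congr fun x hx => by
      simp only [fc, max_eq_right ((le_min hy hcb).trans hx.1)]
  have hFTC : HasDerivAt (fun y => ∫ x in y..b, fc x) (-fc (a g)) (a g) :=
    intervalIntegral.integral_hasDerivAt_left (hfc.intervalIntegrable _ _)
      (hfc.stronglyMeasurableAtFilter _ _) hfc.continuousAt
  have hval : fc (a g) = f (a g) := by simp only [fc, max_eq_right (mem_Ici.1 (has hg))]
  rw [← hval]
  exact (hFTC.scomp_hasDerivWithinAt g ha).congr (fun t ht => (hfc_eq _ (has ht)).symm)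
    (hfc_eq _ (has hg)).symm

end IntervalIntegral

/-- The objective `H(y; γ)` of the cut-off problem, written so that it agrees with the paper's
`y K(F(y); γ) + ∫_y^{xε} K(F; γ)` on the curve `K(F(y); γ) = γ`. -/
noncomputable def cutoffObjective (F K₀ : ℝ → ℝ) (xε γ y : ℝ) : ℝ :=
  (1 + γ) * (∫ x in y..xε, K₀ (F x)) + γ * (∫ x in y..xε, (1 - F x)) + γ * y

/-- `∂H(y; γ)/∂γ`. -/
noncomputable def cutoffMarginal (F K₀ : ℝ → ℝ) (xε y : ℝ) : ℝ :=
  (∫ x in y..xε, K₀ (F x)) + (∫ x in y..xε, (1 - F x)) + y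

section Cutoff

variable {F K₀ : ℝ → ℝ} {xε : ℝ}

theorem hasDerivWithinAt_cutoffObjective {a : ℝ → ℝ} {s : Set ℝ} {a' g : ℝ}
    (hF : ContinuousOn F (Ici 0)) (hKF : ContinuousOn (fun x => K₀ (F x)) (Ici 0))
    (has : MapsTo a s (Icc 0 xε)) (ha : HasDerivWithinAt a a' s g) (hg : g ∈ s)
    (hcrit : (1 + g) * K₀ (F (a g)) = g * F (a g)) :
    HasDerivWithinAt (fun t => cutoffObjective F K₀ xε t (a t)) (cutoffMarginal F K₀ xε (a g))
      s g := by
  have hxε : 0 ≤ xε := (has hg).1.trans (has hg).2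
  have has₀ := has.mono_right Icc_subset_Ici_self
  have hK := ha.intervalIntegral_left hKF hxε has₀ hg
  have h1F := ha.intervalIntegral_left (f := fun x => 1 - F x) (continuousOn_const.sub hF) hxε
    has₀ hg
  have hid := hasDerivWithinAt_id g s
  refine ((((hid.const_add 1).mul hK).add (hid.mul h1F)).add (hid.mul ha)).congr_deriv ?_
  simp only [cutoffMarginal, id, smul_eq_mul]
  linear_combination -a' * hcrit

theorem monotoneOn_cutoffMarginal {D : Set ℝ} (hF : ContinuousOn F (Ici 0))
    (hKF : ContinuousOn (fun x => K₀ (F x)) (Ici 0)) (hxε : 0 ≤ xε) (hD : Convex ℝ D)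
    (hD₀ : D ⊆ Ici 0) (hle : ∀ y ∈ D, K₀ (F y) ≤ F y) :
    MonotoneOn (cutoffMarginal F K₀ xε) D := by
  have hderiv : ∀ y ∈ D, HasDerivWithinAt (cutoffMarginal F K₀ xε) (F y - K₀ (F y)) D y := by
    intro y hy
    have hid := hasDerivWithinAt_id y D
    have hK := hid.intervalIntegral_left hKF hxε hD₀ hy
    have h1F := hid.intervalIntegral_left (f := fun x => 1 - F x) (continuousOn_const.sub hF) hxε
      hD₀ hy
    refine ((hK.add h1F).add hid).congr_deriv ?_
    simp only [one_smul]
    ring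
  refine monotoneOn_of_hasDerivWithinAt_nonneg hD (fun y hy => (hderiv y hy).continuousWithinAt)
    (fun y hy => (hderiv y (interior_subset hy)).mono interior_subset) fun y hy => ?_
  exact sub_nonneg.2 (hle y (interior_subset hy))

theorem antitoneOn_cutoffMarginal_comp {a : ℝ → ℝ} {s : Set ℝ} (hF : ContinuousOn F (Ici 0))
    (hKF : ContinuousOn (fun x => K₀ (F x)) (Ici 0)) (hs : s.OrdConnected) (ha : ContinuousOn a s)
    (hanti : AntitoneOn a s) (has : MapsTo a s (Icc 0 xε))
    (hbelow : ∀ g ∈ s, K₀ (F (a g)) ≤ F (a g)) :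
    AntitoneOn (fun g => cutoffMarginal F K₀ xε (a g)) s := by
  intro g₁ hg₁ g₂ hg₂ h12
  have ha12 : a g₂ ≤ a g₁ := hanti hg₁ hg₂ h12
  -- By the intermediate value theorem every `y` between `a g₂` and `a g₁` is some `a g`.
  have hle : ∀ y ∈ Icc (a g₂) (a g₁), K₀ (F y) ≤ F y := by
    intro y hy
    obtain ⟨g, hg, rfl⟩ := intermediate_value_Icc' h12 (ha.mono (hs.out hg₁ hg₂)) hy
    exact hbelow g (hs.out hg₁ hg₂ hg)
  exact monotoneOn_cutoffMarginal hF hKF ((has hg₁).1.trans (has hg₁).2) (convex_Icc _ _)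
    (fun y hy => (has hg₂).1.trans hy.1) hle (left_mem_Icc.2 ha12) (right_mem_Icc.2 ha12) ha12

end Cutoff

theorem H_concave_general
    (F K₀ : ℝ → ℝ) (xε γlo γhi : ℝ) (a a' : ℝ → ℝ)
    (hFc : Continuous F)
    (hFrange : ∀ x, 0 ≤ x → F x ∈ Icc (0:ℝ) 1)
    (hK₀c : ContinuousOn K₀ (Icc 0 1))
    (hγlo : 0 < γlo)
    (hrange : ∀ g ∈ Icc γlo γhi, a g ∈ Icc 0 xε)
    (hderiv : ∀ g ∈ Icc γlo γhi, HasDerivWithinAt a (a' g) (Icc γlo γhi) g)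
    (hanti : AntitoneOn a (Icc γlo γhi))
    (heq : ∀ g ∈ Icc γlo γhi, K₀ (F (a g)) = g / (1 + g) * F (a g)) :
    (∀ g ∈ Icc γlo γhi,
        HasDerivWithinAt
          (fun t => (1 + t) * (∫ x in a t..xε, K₀ (F x))
            + t * (∫ x in a t..xε, (1 - F x)) + t * a t)
          ((∫ x in a g..xε, K₀ (F x)) + (∫ x in a g..xε, (1 - F x)) + a g)
          (Icc γlo γhi) g) ∧
      AntitoneOn
        (fun g => (∫ x in a g..xε, K₀ (F x)) + (∫ x in a g..xε, (1 - F x)) + a g)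
        (Icc γlo γhi) ∧
      ConcaveOn ℝ (Icc γlo γhi)
        (fun t => (1 + t) * (∫ x in a t..xε, K₀ (F x))
          + t * (∫ x in a t..xε, (1 - F x)) + t * a t) := by
  have hKF : ContinuousOn (fun x => K₀ (F x)) (Ici 0) :=
    hK₀c.comp hFc.continuousOn fun x hx => hFrange x hx
  have hcrit : ∀ g ∈ Icc γlo γhi, (1 + g) * K₀ (F (a g)) = g * F (a g) := by
    intro g hg
    have : 1 + g ≠ 0 := by linarith [hg.1]
    rw [heq g hg]
    field_simp
  have hbelow : ∀ g ∈ Icc γlo γhi, K₀ (F (a g)) ≤ F (a g) := by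
    intro g hg
    have hF₀ : 0 ≤ F (a g) := (hFrange _ (hrange g hg).1).1
    nlinarith [hcrit g hg, hg.1]
  have hH' : ∀ g ∈ Icc γlo γhi, HasDerivWithinAt (fun t => cutoffObjective F K₀ xε t (a t))
      (cutoffMarginal F K₀ xε (a g)) (Icc γlo γhi) g := fun g hg =>
    hasDerivWithinAt_cutoffObjective hFc.continuousOn hKF hrange (hderiv g hg) hg (hcrit g hg)
  have hH'_anti : AntitoneOn (fun g => cutoffMarginal F K₀ xε (a g)) (Icc γlo γhi) :=
    antitoneOn_cutoffMarginal_comp hFc.continuousOn hKF ordConnected_Icc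
      (fun g hg => (hderiv g hg).continuousWithinAt) hanti hrange hbelow
  exact ⟨hH', hH'_anti, concaveOn_of_hasDerivWithinAt_of_antitoneOn (convex_Icc _ _) hH' hH'_anti⟩

/-- Concavity of `H(a_γ; γ)` in the proof of Lemma 1: along the curve
`a(γ)` defined by `K₀(F(a_γ)) = (γ/(1+γ)) F(a_γ)`, the function
`H(γ) = (1+γ)∫_{aγ}^{xε} K₀(F) + γ∫_{aγ}^{xε}(1-F) + γ aγ` has derivative
`H'(γ) = ∫_{aγ}^{xε} K₀(F) + ∫_{aγ}^{xε}(1-F) + aγ`, `H'` is nonincreasing,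
and `H` is concave. -/
theorem H_concave
    (F K₀ : ℝ → ℝ) (xε γlo γhi : ℝ) (a a' : ℝ → ℝ)
    (hFc : Continuous F) (hFm : StrictMonoOn F (Ici 0))
    (hFrange : ∀ x, 0 ≤ x → F x ∈ Icc (0:ℝ) 1)
    (hK₀conc : ConcaveOn ℝ (Icc 0 1) K₀)
    (hK₀c : ContinuousOn K₀ (Icc 0 1))
    (hK₀nn : ∀ u ∈ Icc (0:ℝ) 1, 0 ≤ K₀ u)
    (hK₀0 : K₀ 0 = 0) (hK₀1 : K₀ 1 = 0)
    (hxε : 0 < xε) (hγlo : 0 < γlo) (hγ : γlo ≤ γhi)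
    (hrange : ∀ g ∈ Icc γlo γhi, a g ∈ Icc 0 xε)
    (hderiv : ∀ g ∈ Icc γlo γhi, HasDerivWithinAt a (a' g) (Icc γlo γhi) g)
    (hanti : AntitoneOn a (Icc γlo γhi))
    (heq : ∀ g ∈ Icc γlo γhi, K₀ (F (a g)) = g / (1 + g) * F (a g)) :
    (∀ g ∈ Icc γlo γhi,
        HasDerivWithinAt
          (fun t => (1 + t) * (∫ x in a t..xε, K₀ (F x))
            + t * (∫ x in a t..xε, (1 - F x)) + t * a t)
          ((∫ x in a g..xε, K₀ (F x)) + (∫ x in a g..xε, (1 - F x)) + a g)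
          (Icc γlo γhi) g) ∧
      AntitoneOn
        (fun g => (∫ x in a g..xε, K₀ (F x)) + (∫ x in a g..xε, (1 - F x)) + a g)
        (Icc γlo γhi) ∧
      ConcaveOn ℝ (Icc γlo γhi)
        (fun t => (1 + t) * (∫ x in a t..xε, K₀ (F x))
          + t * (∫ x in a t..xε, (1 - F x)) + t * a t) :=
  H_concave_general F K₀ xε γlo γhi a a' hFc hFrange hK₀c hγlo hrange hderiv hanti heq
end
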